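/- arXiv:2010.09148 — 8 statements merged into one kernel-verified Lean document; each statement's English description precedes it below -/
import Mathlib

section
/- Let (L,[·,·]') be a Lie algebra over a field K and let α, β : L → L be commuting Lie algebra morphisms (α([a,b]') = [α(a),α(b)]', β([a,b]') = [β(a),β(b)]', αβ = βα). Define [a,b] := [α(a),β(b)]'. Then (L,[·,·],α,β) is a BiHom-Lie algebra, i.e., it satisfies BiHom-skew-symmetry [β(x),α(y)] = -[β(y),α(x)] and the BiHom-Jacobi identity. -/
theorem yauTwist_isBiHomLie_general {K : Type*} [Field K] {L : Type*} [LieRing L] [LieAlgebra K L]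
    (α β : L →ₗ[K] L)
    (hβ : ∀ a b : L, β ⁅a, b⁆ = ⁅β a, β b⁆)
    (hcomm : ∀ a : L, α (β a) = β (α a)) :
    (∀ x y : L, ⁅α (β x), β (α y)⁆ = - ⁅α (β y), β (α x)⁆) ∧
    (∀ x y z : L,
      ⁅α (β (β x)), β ⁅α (β y), β (α z)⁆⁆ +
      ⁅α (β (β y)), β ⁅α (β z), β (α x)⁆⁆ +
      ⁅α (β (β z)), β ⁅α (β x), β (α y)⁆⁆ = 0) := by
  -- Once `β` is pushed inside the brackets and every `β ∘ α` is rewritten as `α ∘ β`, both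
  -- identities are the untwisted ones, at the points `α (β x)`, resp. `α (β (β x))`.
  have hβα : ∀ a : L, β (α a) = α (β a) := fun a => (hcomm a).symm
  refine ⟨fun x y => ?_, fun x y z => ?_⟩
  · rw [hβα, hβα, lie_skew]
  · simp only [hβ, hβα]
    exact lie_jacobi _ _ _

/-- The Yau twist of a Lie algebra by two commuting Lie algebra morphisms α, β,
with bracket [a,b] := [α a, β b]', is a BiHom-Lie algebra. -/
theorem yauTwist_isBiHomLie {K : Type*} [Field K] {L : Type*} [LieRing L] [LieAlgebra K L]
    (α β : L →ₗ[K] L)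
    (hα : ∀ a b : L, α ⁅a, b⁆ = ⁅α a, α b⁆)
    (hβ : ∀ a b : L, β ⁅a, b⁆ = ⁅β a, β b⁆)
    (hcomm : ∀ a : L, α (β a) = β (α a)) :
    (∀ x y : L, ⁅α (β x), β (α y)⁆ = - ⁅α (β y), β (α x)⁆) ∧
    (∀ x y z : L,
      ⁅α (β (β x)), β ⁅α (β y), β (α z)⁆⁆ +
      ⁅α (β (β y)), β ⁅α (β z), β (α x)⁆⁆ +
      ⁅α (β (β z)), β ⁅α (β x), β (α y)⁆⁆ = 0) :=
  yauTwist_isBiHomLie_general α β hβ hcomm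
end

section
/- Let (G,[·,·],α,β) be a regular multiplicative BiHom-Lie algebra (α, β bijective). Define [x,y]' := [α⁻¹(x), β⁻¹(y)]. Then (G,[·,·]') is a Lie algebra, i.e., [·,·]' is antisymmetric and satisfies the Jacobi identity. -/
/-!
Substitute `x = β (α u)` in the skew-symmetry and `x = β (β (α u))` in the BiHom-Jacobi
identity (possible since `α` and `β` are bijective). As `α` and `β` commute, `α⁻¹` then
strips the `α` and `β⁻¹` strips one `β`, and multiplicativity of `β` lets `β⁻¹` pass
through the inner bracket; the two BiHom axioms become exactly the two Lie axioms of
`[x, y]' = [α⁻¹ x, β⁻¹ y]`.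
-/

theorem LinearEquiv.symm_apply_of_commute {R M : Type*} [Semiring R] [AddCommMonoid M]
    [Module R M] (e : M ≃ₗ[R] M) {f : M → M} (h : Function.Commute e f) (x : M) :
    e.symm (f (e x)) = f x :=
  e.symm_apply_eq.mpr (h x).symm

theorem inducedLie_of_regularBiHomLie_general {K : Type*} [Field K] {G : Type*} [AddCommGroup G]
    [Module K G] (α β : G ≃ₗ[K] G) (br : G →ₗ[K] G →ₗ[K] G)
    (hcomm : ∀ x : G, α (β x) = β (α x))
    (hskew : ∀ x y : G, br (β x) (α y) = - br (β y) (α x))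
    (hjac : ∀ x y z : G,
      br (β (β x)) (br (β y) (α z)) + br (β (β y)) (br (β z) (α x)) +
        br (β (β z)) (br (β x) (α y)) = 0)
    (hβ : ∀ x y : G, β (br x y) = br (β x) (β y)) :
    (∀ x y : G, br (α.symm x) (β.symm y) = - br (α.symm y) (β.symm x)) ∧
    (∀ x y z : G,
      br (α.symm x) (β.symm (br (α.symm y) (β.symm z))) +
      br (α.symm y) (β.symm (br (α.symm z) (β.symm x))) +
      br (α.symm z) (β.symm (br (α.symm x) (β.symm y))) = 0) := by
  have hαβ : Function.Commute α β := hcomm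
  have hα_symm : ∀ u, α.symm (β (α u)) = β u := α.symm_apply_of_commute hαβ
  have hα_symm₂ : ∀ u, α.symm (β (β (α u))) = β (β u) :=
    α.symm_apply_of_commute (hαβ.comp_right hαβ)
  have hβ_symm : ∀ x y, β.symm (br (β x) (β y)) = br x y :=
    fun x y ↦ β.symm_apply_eq.mpr (hβ x y).symm
  have hβα : Function.Surjective (β ∘ α) := β.surjective.comp α.surjective
  have hββα : Function.Surjective (β ∘ β ∘ α) := β.surjective.comp hβα
  constructor
  · intro x y
    obtain ⟨u, rfl⟩ := hβα x
    obtain ⟨v, rfl⟩ := hβα y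
    simp only [Function.comp_apply, hα_symm, LinearEquiv.symm_apply_apply]
    exact hskew u v
  · intro x y z
    obtain ⟨a, rfl⟩ := hββα x
    obtain ⟨b, rfl⟩ := hββα y
    obtain ⟨c, rfl⟩ := hββα z
    simp only [Function.comp_apply, hα_symm₂, LinearEquiv.symm_apply_apply, hβ_symm]
    exact hjac a b c

/-- The induced bracket [x,y]' = [α⁻¹ x, β⁻¹ y] of a regular multiplicative
BiHom-Lie algebra is a Lie bracket: antisymmetric and satisfying the Jacobi identity. -/
theorem inducedLie_of_regularBiHomLie {K : Type*} [Field K] {G : Type*} [AddCommGroup G]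
    [Module K G] (α β : G ≃ₗ[K] G) (br : G →ₗ[K] G →ₗ[K] G)
    (hcomm : ∀ x : G, α (β x) = β (α x))
    (hskew : ∀ x y : G, br (β x) (α y) = - br (β y) (α x))
    (hjac : ∀ x y z : G,
      br (β (β x)) (br (β y) (α z)) + br (β (β y)) (br (β z) (α x)) +
        br (β (β z)) (br (β x) (α y)) = 0)
    (hα : ∀ x y : G, α (br x y) = br (α x) (α y))
    (hβ : ∀ x y : G, β (br x y) = br (β x) (β y)) :
    (∀ x y : G, br (α.symm x) (β.symm y) = - br (α.symm y) (β.symm x)) ∧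
    (∀ x y z : G,
      br (α.symm x) (β.symm (br (α.symm y) (β.symm z))) +
      br (α.symm y) (β.symm (br (α.symm z) (β.symm x))) +
      br (α.symm z) (β.symm (br (α.symm x) (β.symm y))) = 0) :=
  inducedLie_of_regularBiHomLie_general α β br hcomm hskew hjac hβ
end

section
/- Let (L,[·,·],α,β) be a BiHom-Lie algebra. If D is a (λ,μ,γ)-α^kβ^l-derivation and D' is a (λ',μ',γ')-α^sβ^t-derivation, then their commutator [D,D'] = D∘D' - D'∘D is a (λλ',μμ',γγ')-α^{k+s}β^{l+t}-derivation. -/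
/-!
If `D` and `D'` are generalized derivations twisted by `A` and `B`, expanding
`λλ' D (D' [x, y])` with the two derivation rules produces four brackets, and likewise for
`D' (D [x, y])`. When `D` commutes with `B`, `D'` with `A` and `A` with `B`, the two mixed
brackets of each expansion agree with those of the other one, so they cancel in the
commutator, leaving the derivation rule for `[D, D']` twisted by `A * B`.
-/

section Monoid

variable {M : Type*} [Monoid M]

theorem Commute.pow_mul_pow_right {a b c : M} (ha : Commute c a) (hb : Commute c b) (k l : ℕ) :
    Commute c (a ^ k * b ^ l) :=
  (ha.pow_right k).mul_right (hb.pow_right l)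

theorem Commute.pow_mul_pow_mul_pow_mul_pow {a b : M} (h : Commute a b) (k l s t : ℕ) :
    a ^ k * b ^ l * (a ^ s * b ^ t) = a ^ (k + s) * b ^ (l + t) := by
  rw [pow_add, pow_add, mul_assoc, ← mul_assoc (b ^ l), (h.symm.pow_pow l s).eq]
  simp only [mul_assoc]

end Monoid

theorem Commute.lie_left {R : Type*} [Ring R] {x y z : R} (hx : Commute x z) (hy : Commute y z) :
    Commute ⁅x, y⁆ z :=
  (hx.mul_left hy).sub_left (hy.mul_left hx)

section GenDerivation

variable {K L : Type*} [CommRing K] [AddCommGroup L] [Module K L]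

def IsGenDerivation (br : L →ₗ[K] L →ₗ[K] L) (A : Module.End K L) (lam mu gam : K)
    (D : Module.End K L) : Prop :=
  ∀ x y : L, lam • D (br x y) = mu • br (D x) (A y) + gam • br (A x) (D y)

lemma Commute.apply_apply {f g : Module.End K L} (h : Commute f g) (v : L) :
    f (g v) = g (f v) :=
  LinearMap.congr_fun h.eq v

theorem IsGenDerivation.lie {br : L →ₗ[K] L →ₗ[K] L} {A B D D' : Module.End K L}
    {lam mu gam lam' mu' gam' : K} (hD : IsGenDerivation br A lam mu gam D)
    (hD' : IsGenDerivation br B lam' mu' gam' D') (hAB : Commute A B) (hDB : Commute D B)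
    (hD'A : Commute D' A) :
    IsGenDerivation br (A * B) (lam * lam') (mu * mu') (gam * gam') ⁅D, D'⁆ := by
  intro x y
  have expand_DD' : (lam * lam') • D (D' (br x y)) =
      lam • D (mu' • br (D' x) (B y) + gam' • br (B x) (D' y)) := by
    rw [← hD' x y, map_smul, smul_smul]
  have expand_D'D : (lam * lam') • D' (D (br x y)) =
      lam' • D' (mu • br (D x) (A y) + gam • br (A x) (D y)) := by
    rw [← hD x y, map_smul, smul_smul, mul_comm]
  simp only [map_add, map_smul, smul_add, smul_smul] at expand_DD' expand_D'D
  have hD_left := hD (D' x) (B y)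
  have hD_right := hD (B x) (D' y)
  have hD'_left := hD' (D x) (A y)
  have hD'_right := hD' (A x) (D y)
  simp only [hDB.apply_apply, hD'A.apply_apply, hAB.apply_apply]
    at hD_left hD_right hD'_left hD'_right
  simp only [Ring.lie_def, Module.End.mul_apply, LinearMap.sub_apply, map_sub, hAB.apply_apply]
  linear_combination (norm := module)
    expand_DD' - expand_D'D + mu' • hD_left + gam' • hD_right - mu • hD'_left - gam • hD'_right

end GenDerivation

theorem commutator_genDerivation_general {K : Type*} [Field K] {L : Type*} [AddCommGroup L]
    [Module K L] (α β : L →ₗ[K] L) (br : L →ₗ[K] L →ₗ[K] L)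
    (hcomm : α ∘ₗ β = β ∘ₗ α)
    (k l s t : ℕ) (lam mu gam lam' mu' gam' : K) (D D' : L →ₗ[K] L)
    (hDα : D ∘ₗ α = α ∘ₗ D) (hDβ : D ∘ₗ β = β ∘ₗ D)
    (hD'α : D' ∘ₗ α = α ∘ₗ D') (hD'β : D' ∘ₗ β = β ∘ₗ D')
    (hD : ∀ x y : L, lam • D (br x y) =
      mu • br (D x) ((α ^ k * β ^ l) y) + gam • br ((α ^ k * β ^ l) x) (D y))
    (hD' : ∀ x y : L, lam' • D' (br x y) =
      mu' • br (D' x) ((α ^ s * β ^ t) y) + gam' • br ((α ^ s * β ^ t) x) (D' y)) :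
    ((D ∘ₗ D' - D' ∘ₗ D) ∘ₗ α = α ∘ₗ (D ∘ₗ D' - D' ∘ₗ D)) ∧
    ((D ∘ₗ D' - D' ∘ₗ D) ∘ₗ β = β ∘ₗ (D ∘ₗ D' - D' ∘ₗ D)) ∧
    (∀ x y : L, (lam * lam') • (D ∘ₗ D' - D' ∘ₗ D) (br x y) =
      (mu * mu') • br ((D ∘ₗ D' - D' ∘ₗ D) x) ((α ^ (k + s) * β ^ (l + t)) y) +
      (gam * gam') • br ((α ^ (k + s) * β ^ (l + t)) x) ((D ∘ₗ D' - D' ∘ₗ D) y)) := by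
  have hαβ : Commute α β := hcomm
  have hDα : Commute D α := hDα
  have hDβ : Commute D β := hDβ
  have hD'α : Commute D' α := hD'α
  have hD'β : Commute D' β := hD'β
  have hAB : Commute (α ^ k * β ^ l) (α ^ s * β ^ t) :=
    (Commute.pow_mul_pow_right ((Commute.refl α).pow_mul_pow_right hαβ s t).symm
      (hαβ.symm.pow_mul_pow_right (Commute.refl β) s t).symm k l).symm
  have hlie := IsGenDerivation.lie hD hD' hAB (hDα.pow_mul_pow_right hDβ s t)
    (hD'α.pow_mul_pow_right hD'β k l)
  rw [hαβ.pow_mul_pow_mul_pow_mul_pow] at hlie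
  exact ⟨hDα.lie_left hD'α, hDβ.lie_left hD'β, hlie⟩

/-- The commutator of a (λ,μ,γ)-α^kβ^l-derivation and a (λ',μ',γ')-α^sβ^t-derivation
is a (λλ',μμ',γγ')-α^(k+s)β^(l+t)-derivation. -/
theorem commutator_genDerivation {K : Type*} [Field K] {L : Type*} [AddCommGroup L]
    [Module K L] (α β : L →ₗ[K] L) (br : L →ₗ[K] L →ₗ[K] L)
    (hcomm : α ∘ₗ β = β ∘ₗ α)
    (hskew : ∀ x y : L, br (β x) (α y) = - br (β y) (α x))
    (hjac : ∀ x y z : L,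
      br (β (β x)) (br (β y) (α z)) + br (β (β y)) (br (β z) (α x)) +
        br (β (β z)) (br (β x) (α y)) = 0)
    (k l s t : ℕ) (lam mu gam lam' mu' gam' : K) (D D' : L →ₗ[K] L)
    (hDα : D ∘ₗ α = α ∘ₗ D) (hDβ : D ∘ₗ β = β ∘ₗ D)
    (hD'α : D' ∘ₗ α = α ∘ₗ D') (hD'β : D' ∘ₗ β = β ∘ₗ D')
    (hD : ∀ x y : L, lam • D (br x y) =
      mu • br (D x) ((α ^ k * β ^ l) y) + gam • br ((α ^ k * β ^ l) x) (D y))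
    (hD' : ∀ x y : L, lam' • D' (br x y) =
      mu' • br (D' x) ((α ^ s * β ^ t) y) + gam' • br ((α ^ s * β ^ t) x) (D' y)) :
    ((D ∘ₗ D' - D' ∘ₗ D) ∘ₗ α = α ∘ₗ (D ∘ₗ D' - D' ∘ₗ D)) ∧
    ((D ∘ₗ D' - D' ∘ₗ D) ∘ₗ β = β ∘ₗ (D ∘ₗ D' - D' ∘ₗ D)) ∧
    (∀ x y : L, (lam * lam') • (D ∘ₗ D' - D' ∘ₗ D) (br x y) =
      (mu * mu') • br ((D ∘ₗ D' - D' ∘ₗ D) x) ((α ^ (k + s) * β ^ (l + t)) y) +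
      (gam * gam') • br ((α ^ (k + s) * β ^ (l + t)) x) ((D ∘ₗ D' - D' ∘ₗ D) y)) :=
  commutator_genDerivation_general α β br hcomm k l s t lam mu gam lam' mu' gam' D D' hDα hDβ hD'α
    hD'β hD hD'
end

section
/- Let (G,[·,·],α,β) be a BiHom-Lie algebra with α and β surjective, and let d be a (λ,μ,γ)-α^kβ^l-derivation with μ ≠ γ. Then [d(x), α^kβ^l(y)] = [α^kβ^l(x), d(y)] for all x,y ∈ G, and consequently λ·d([x,y]) = (μ+γ)·[d(x), α^kβ^l(y)] for all x,y ∈ G. -/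
/-! Write `φ = α^k β^l`; it commutes with α and β, as does `d`. For `x = β a`, `y = α b` the
skew-symmetry of the bracket swaps `[d x, φ y]` with `-[φ (β b), d (α a)]`, so applying the
derivation identity to `(β a, α b)` and to `(β b, α a)` and adding gives
`(μ - γ) • ([d x, φ y] - [φ x, d y]) = 0`. Surjectivity of α and β covers all `x`, `y`. -/

theorem eq_of_smul_add_smul_of_antisymm {R M ι : Type*} [CommRing R] [IsDomain R]
    [AddCommGroup M] [Module R M] [Module.IsTorsionFree R M] (L A B : ι → ι → M) {μ γ : R}
    (hμγ : μ ≠ γ) (hL : ∀ a b, L b a = -L a b) (hAB : ∀ a b, A a b = -B b a)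
    (h : ∀ a b, L a b = μ • A a b + γ • B a b) (a b : ι) : A a b = B a b := by
  have : (μ - γ) • (A a b - B a b) = 0 := by
    linear_combination (norm := module)
      -(h a b) - h b a + hL a b - μ • hAB b a - γ • hAB a b
  exact sub_eq_zero.1 ((smul_eq_zero.1 this).resolve_left (sub_ne_zero.2 hμγ))

theorem Commute.linearMap_apply_apply {R M : Type*} [Semiring R] [AddCommMonoid M]
    [Module R M] {u v : Module.End R M} (h : Commute u v) (x : M) : u (v x) = v (u x) :=
  LinearMap.congr_fun h x

theorem bracket_map_beta_map_alpha_swap {R M : Type*} [CommSemiring R] [AddCommGroup M]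
    [Module R M] {α β f g : Module.End R M} (br : M →ₗ[R] M →ₗ[R] M)
    (hskew : ∀ x y : M, br (β x) (α y) = -br (β y) (α x))
    (hfα : Commute f α) (hfβ : Commute f β) (hgα : Commute g α) (hgβ : Commute g β)
    (a b : M) : br (f (β a)) (g (α b)) = -br (g (β b)) (f (α a)) := by
  rw [hfβ.linearMap_apply_apply, hgα.linearMap_apply_apply, hskew,
    hfα.linearMap_apply_apply, hgβ.linearMap_apply_apply]

theorem genDerivation_of_mu_ne_gam_general {K : Type*} [Field K] {G : Type*} [AddCommGroup G]
    [Module K G] (α β : G →ₗ[K] G) (br : G →ₗ[K] G →ₗ[K] G)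
    (hcomm : α ∘ₗ β = β ∘ₗ α)
    (hskew : ∀ x y : G, br (β x) (α y) = - br (β y) (α x))
    (hαsurj : Function.Surjective α) (hβsurj : Function.Surjective β)
    (k l : ℕ) (lam mu gam : K) (hmg : mu ≠ gam) (d : G →ₗ[K] G)
    (hdα : d ∘ₗ α = α ∘ₗ d) (hdβ : d ∘ₗ β = β ∘ₗ d)
    (hd : ∀ x y : G, lam • d (br x y) =
      mu • br (d x) ((α ^ k * β ^ l) y) + gam • br ((α ^ k * β ^ l) x) (d y)) :
    (∀ x y : G, br (d x) ((α ^ k * β ^ l) y) = br ((α ^ k * β ^ l) x) (d y)) ∧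
    (∀ x y : G, lam • d (br x y) = (mu + gam) • br (d x) ((α ^ k * β ^ l) y)) := by
  have hαβ : Commute α β := hcomm
  have hφα : Commute (α ^ k * β ^ l) α :=
    ((Commute.refl α).pow_left k).mul_left (hαβ.symm.pow_left l)
  have hφβ : Commute (α ^ k * β ^ l) β :=
    (hαβ.pow_left k).mul_left ((Commute.refl β).pow_left l)
  have hcommute : ∀ x y : G, br (d x) ((α ^ k * β ^ l) y) = br ((α ^ k * β ^ l) x) (d y) :=
    hβsurj.forall.2 fun a => hαsurj.forall.2 fun b =>
      eq_of_smul_add_smul_of_antisymm (fun u v => lam • d (br (β u) (α v)))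
        (fun u v => br (d (β u)) ((α ^ k * β ^ l) (α v)))
        (fun u v => br ((α ^ k * β ^ l) (β u)) (d (α v))) hmg
        (fun u v => by rw [hskew, map_neg, smul_neg])
        (bracket_map_beta_map_alpha_swap br hskew hdα hdβ hφα hφβ)
        (fun u v => hd (β u) (α v)) a b
  exact ⟨hcommute, fun x y => by rw [hd, ← hcommute, add_smul]⟩

/-- For a BiHom-Lie algebra with α, β surjective and a (λ,μ,γ)-α^kβ^l-derivation d
with μ ≠ γ, one has [d x, α^kβ^l y] = [α^kβ^l x, d y] and
λ • d [x,y] = (μ+γ) • [d x, α^kβ^l y]. -/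
theorem genDerivation_of_mu_ne_gam {K : Type*} [Field K] {G : Type*} [AddCommGroup G]
    [Module K G] (α β : G →ₗ[K] G) (br : G →ₗ[K] G →ₗ[K] G)
    (hcomm : α ∘ₗ β = β ∘ₗ α)
    (hskew : ∀ x y : G, br (β x) (α y) = - br (β y) (α x))
    (hjac : ∀ x y z : G,
      br (β (β x)) (br (β y) (α z)) + br (β (β y)) (br (β z) (α x)) +
        br (β (β z)) (br (β x) (α y)) = 0)
    (hα : ∀ x y : G, α (br x y) = br (α x) (α y))
    (hβ : ∀ x y : G, β (br x y) = br (β x) (β y))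
    (hαsurj : Function.Surjective α) (hβsurj : Function.Surjective β)
    (k l : ℕ) (lam mu gam : K) (hmg : mu ≠ gam) (d : G →ₗ[K] G)
    (hdα : d ∘ₗ α = α ∘ₗ d) (hdβ : d ∘ₗ β = β ∘ₗ d)
    (hd : ∀ x y : G, lam • d (br x y) =
      mu • br (d x) ((α ^ k * β ^ l) y) + gam • br ((α ^ k * β ^ l) x) (d y)) :
    (∀ x y : G, br (d x) ((α ^ k * β ^ l) y) = br ((α ^ k * β ^ l) x) (d y)) ∧
    (∀ x y : G, lam • d (br x y) = (mu + gam) • br (d x) ((α ^ k * β ^ l) y)) :=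
  genDerivation_of_mu_ne_gam_general α β br hcomm hskew hαsurj hβsurj k l lam mu gam hmg d hdα hdβ
    hd
end

section
/- Let (G,[·,·],α,β) be a BiHom-Lie algebra with α, β surjective and λ ≠ 0, μ² ≠ γ². Then the set of (λ,μ,γ)-α^kβ^l-derivations equals the set of (λ/(μ+γ), 1, 0)-α^kβ^l-derivations. -/
/-!
Surjectivity of `α` and `β` lets one test a derivation identity only on pairs `(β x, α y)`.
There, BiHom-skew-symmetry turns the `γ`-term into minus the `μ`-term with `x` and `y` swapped,
and makes `d [β x, α y]` antisymmetric in `x, y`. Comparing the identity at `(x, y)` and `(y, x)`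
shows, once `μ ≠ γ`, that the `μ`-term is itself antisymmetric, so the identity collapses to
`λ d [β x, α y] = (μ + γ) [d (β x), α^k β^l (α y)]`, and `μ + γ ≠ 0` lets one divide.
-/

theorem forall_smul_eq_smul_add_smul_iff_of_antisymm {K V ι : Type*} [Field K]
    [AddCommGroup V] [Module K V] {D F G : ι → ι → V}
    (hD : ∀ x y, D y x = -D x y) (hG : ∀ x y, G x y = -F y x)
    {lam mu gam : K} (hmg : mu ^ 2 ≠ gam ^ 2) :
    (∀ x y, lam • D x y = mu • F x y + gam • G x y) ↔
      ∀ x y, (lam / (mu + gam)) • D x y = F x y := by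
  have hadd : mu + gam ≠ 0 := fun h => hmg (by rw [eq_neg_of_add_eq_zero_left h, neg_sq])
  have hsub : mu - gam ≠ 0 := fun h => hmg (by rw [sub_eq_zero.mp h])
  simp only [hG, smul_neg, ← sub_eq_add_neg]
  constructor
  · intro h x y
    have hF : F y x = -F x y := by
      have hsum : (mu - gam) • (F x y + F y x) = (mu - gam) • 0 := by
        have hswap := h y x
        rw [hD] at hswap
        linear_combination (norm := module) -hswap - h x y
      exact eq_neg_of_add_eq_zero_right (smul_right_injective V hsub hsum)
    rw [div_eq_inv_mul, mul_smul, h, hF, smul_neg, sub_neg_eq_add, ← add_smul,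
      inv_smul_smul₀ hadd]
  · intro h x y
    have hF : F y x = -F x y := by rw [← h, ← h, hD, smul_neg]
    rw [hF, smul_neg, sub_neg_eq_add, ← add_smul, ← h, smul_smul, mul_div_cancel₀ _ hadd]

theorem LinearMap.bihom_skew_of_commute {R M : Type*} [CommRing R] [AddCommGroup M] [Module R M]
    {α β : M →ₗ[R] M} {br : M →ₗ[R] M →ₗ[R] M}
    (hskew : ∀ x y : M, br (β x) (α y) = - br (β y) (α x)) {f g : M →ₗ[R] M}
    (hfα : f ∘ₗ α = α ∘ₗ f) (hfβ : f ∘ₗ β = β ∘ₗ f) (hgα : g ∘ₗ α = α ∘ₗ g)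
    (hgβ : g ∘ₗ β = β ∘ₗ g) (x y : M) :
    br (f (β x)) (g (α y)) = - br (g (β y)) (f (α x)) := by
  simp only [← LinearMap.comp_apply, hfα, hfβ, hgα, hgβ]
  exact hskew (f x) (g y)

theorem genDer_eq_of_sq_ne_general {G : Type*} [AddCommGroup G] [Module ℂ G]
    (α β : G →ₗ[ℂ] G) (br : G →ₗ[ℂ] G →ₗ[ℂ] G)
    (hcomm : α ∘ₗ β = β ∘ₗ α)
    (hskew : ∀ x y : G, br (β x) (α y) = - br (β y) (α x))
    (hαsurj : Function.Surjective α) (hβsurj : Function.Surjective β)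
    (k l : ℕ) (lam mu gam : ℂ) (hmg : mu ^ 2 ≠ gam ^ 2) :
    ∀ d : G →ₗ[ℂ] G, d ∘ₗ α = α ∘ₗ d → d ∘ₗ β = β ∘ₗ d →
      ((∀ x y : G, lam • d (br x y) =
          mu • br (d x) ((α ^ k * β ^ l) y) + gam • br ((α ^ k * β ^ l) x) (d y)) ↔
       (∀ x y : G, (lam / (mu + gam)) • d (br x y) = br (d x) ((α ^ k * β ^ l) y))) := by
  intro d hdα hdβ
  have hαβ : Commute α β := hcomm
  have hφα : (α ^ k * β ^ l) ∘ₗ α = α ∘ₗ (α ^ k * β ^ l) :=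
    ((Commute.pow_self α k).mul_left (hαβ.symm.pow_left l)).eq
  have hφβ : (α ^ k * β ^ l) ∘ₗ β = β ∘ₗ (α ^ k * β ^ l) :=
    ((hαβ.pow_left k).mul_left (Commute.pow_self β l)).eq
  have on_image {P : G → G → Prop} : (∀ u v, P u v) ↔ ∀ x y, P (β x) (α y) :=
    hβsurj.forall.trans (forall_congr' fun _ => hαsurj.forall)
  refine on_image.trans (Iff.trans ?_ on_image.symm)
  refine forall_smul_eq_smul_add_smul_iff_of_antisymm (fun x y => ?_) (fun x y => ?_) hmg
  · rw [hskew, map_neg]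
  · exact LinearMap.bihom_skew_of_commute hskew hφα hφβ hdα hdβ x y

/-- For a BiHom-Lie algebra with α, β surjective, λ ≠ 0 and μ² ≠ γ², the
(λ,μ,γ)-α^kβ^l-derivations are exactly the (λ/(μ+γ),1,0)-α^kβ^l-derivations. -/
theorem genDer_eq_of_sq_ne {G : Type*} [AddCommGroup G] [Module ℂ G]
    (α β : G →ₗ[ℂ] G) (br : G →ₗ[ℂ] G →ₗ[ℂ] G)
    (hcomm : α ∘ₗ β = β ∘ₗ α)
    (hskew : ∀ x y : G, br (β x) (α y) = - br (β y) (α x))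
    (hjac : ∀ x y z : G,
      br (β (β x)) (br (β y) (α z)) + br (β (β y)) (br (β z) (α x)) +
        br (β (β z)) (br (β x) (α y)) = 0)
    (hα : ∀ x y : G, α (br x y) = br (α x) (α y))
    (hβ : ∀ x y : G, β (br x y) = br (β x) (β y))
    (hαsurj : Function.Surjective α) (hβsurj : Function.Surjective β)
    (k l : ℕ) (lam mu gam : ℂ) (hlam : lam ≠ 0) (hmg : mu ^ 2 ≠ gam ^ 2) :
    ∀ d : G →ₗ[ℂ] G, d ∘ₗ α = α ∘ₗ d → d ∘ₗ β = β ∘ₗ d →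
      ((∀ x y : G, lam • d (br x y) =
          mu • br (d x) ((α ^ k * β ^ l) y) + gam • br ((α ^ k * β ^ l) x) (d y)) ↔
       (∀ x y : G, (lam / (mu + gam)) • d (br x y) = br (d x) ((α ^ k * β ^ l) y))) :=
  genDer_eq_of_sq_ne_general α β br hcomm hskew hαsurj hβsurj k l lam mu gam hmg
end

section
/- Let d be an α^kβ^l-derivation and φ an α^tβ^s-element of the centroid of a multiplicative BiHom-Lie algebra G. Then d∘φ is an α^{k+t}β^{l+s}-derivation of G if and only if the commutator d∘φ - φ∘d is an α^{k+t}β^{l+s}-central derivation of G. -/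
/-!
Write `θ = α^k β^l` and `τ = α^t β^s`, so that the twist of the claim is `θτ = τθ`.
Then `φ ∘ d` is always a `θτ`-derivation, and the commutator `c = d ∘ φ - φ ∘ d` satisfies `c[u,v] = [c u, θτ v] = [θτ u, c v]`. Hence `d ∘ φ` is a
derivation iff `c` is one, and for such a `c` the derivation identity reads
`c[u,v] = 2 c[u,v]`, i.e. `c` is central.
-/

section TwistedDerivation

variable {R M : Type*} [CommSemiring R] [AddCommGroup M] [Module R M]
  (br : M →ₗ[R] M →ₗ[R] M)

def IsTwistedDerivation (θ d : Module.End R M) : Prop :=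
  ∀ u v, d (br u v) = br (d u) (θ v) + br (θ u) (d v)

def IsTwistedCentroid (τ φ : Module.End R M) : Prop :=
  ∀ u v, φ (br u v) = br (φ u) (τ v) ∧ φ (br u v) = br (τ u) (φ v)

def IsTwistedCentralDerivation (θ c : Module.End R M) : Prop :=
  ∀ u v, c (br u v) = 0 ∧ br (c u) (θ v) = 0 ∧ br (θ u) (c v) = 0

variable {br}

theorem IsTwistedDerivation.sub_iff {θ f g : Module.End R M}
    (hf : IsTwistedDerivation br θ f) :
    IsTwistedDerivation br θ (g - f) ↔ IsTwistedDerivation br θ g := by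
  refine forall₂_congr fun u v => ?_
  simp only [LinearMap.sub_apply, map_sub, hf u v, sub_add_sub_comm, sub_left_inj]

theorem IsTwistedCentroid.isTwistedDerivation_iff {θ c : Module.End R M}
    (hc : IsTwistedCentroid br θ c) :
    IsTwistedDerivation br θ c ↔ IsTwistedCentralDerivation br θ c := by
  refine forall₂_congr fun u v => ?_
  obtain ⟨hleft, hright⟩ := hc u v
  rw [← hleft, ← hright]
  constructor
  · intro h
    have hzero : c (br u v) = 0 := by simpa using h
    exact ⟨hzero, hzero, hzero⟩
  · rintro ⟨hzero, -, -⟩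
    simp [hzero]

theorem IsTwistedCentroid.isTwistedDerivation_mul {θ τ d φ : Module.End R M}
    (hd : IsTwistedDerivation br θ d) (hφ : IsTwistedCentroid br τ φ) :
    IsTwistedDerivation br (τ * θ) (φ * d) := by
  intro u v
  simp only [Module.End.mul_apply]
  rw [hd, map_add, (hφ (d u) _).1, (hφ (θ u) _).2]

theorem IsTwistedDerivation.isTwistedCentroid_commutator {θ τ d φ : Module.End R M}
    (hd : IsTwistedDerivation br θ d) (hφ : IsTwistedCentroid br τ φ)
    (hdτ : Commute d τ) (hφθ : Commute φ θ) (hθτ : Commute θ τ) :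
    IsTwistedCentroid br (θ * τ) (d * φ - φ * d) := by
  have hdτ' (x) : d (τ x) = τ (d x) := LinearMap.congr_fun hdτ.eq x
  have hφθ' (x) : φ (θ x) = θ (φ x) := LinearMap.congr_fun hφθ.eq x
  have hτθ' (x) : τ (θ x) = θ (τ x) := LinearMap.congr_fun hθτ.eq.symm x
  intro u v
  have hφd_uv := hφ.isTwistedDerivation_mul hd u v
  simp only [Module.End.mul_apply] at hφd_uv
  simp only [LinearMap.sub_apply, Module.End.mul_apply, map_sub, hφd_uv]
  constructor
  · have key : br (θ (φ u)) (d (τ v)) = br (τ (θ u)) (φ (d v)) := by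
      rw [hdτ', ← hφθ', ← (hφ _ _).1, (hφ _ _).2]
    rw [(hφ u v).1, hd, key]
    simp only [hτθ']
    abel
  · have key : br (d (τ u)) (θ (φ v)) = br (φ (d u)) (τ (θ v)) := by
      rw [hdτ', ← hφθ', ← (hφ _ _).2, (hφ _ _).1]
    rw [(hφ u v).2, hd, key]
    simp only [hτθ']
    abel

end TwistedDerivation

theorem pow_add_mul_pow_add {M : Type*} [Monoid M] {a b : M} (h : Commute a b)
    (m n p q : ℕ) : a ^ (m + n) * b ^ (p + q) = a ^ m * b ^ p * (a ^ n * b ^ q) := by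
  rw [pow_add, pow_add, mul_assoc, ← mul_assoc (a ^ n), (h.pow_pow n p).eq]
  simp only [mul_assoc]

theorem der_comp_centroid_iff_central_general {K : Type*} [Field K] {G : Type*} [AddCommGroup G]
    [Module K G] (α β : G →ₗ[K] G) (br : G →ₗ[K] G →ₗ[K] G)
    (hcomm : α ∘ₗ β = β ∘ₗ α)
    (k l t s : ℕ) (d φ : G →ₗ[K] G)
    (hdα : d ∘ₗ α = α ∘ₗ d) (hdβ : d ∘ₗ β = β ∘ₗ d)
    (hd : ∀ u v : G, d (br u v) =
      br (d u) ((α ^ k * β ^ l) v) + br ((α ^ k * β ^ l) u) (d v))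
    (hφα : φ ∘ₗ α = α ∘ₗ φ) (hφβ : φ ∘ₗ β = β ∘ₗ φ)
    (hφ : ∀ u v : G, φ (br u v) = br (φ u) ((α ^ t * β ^ s) v) ∧
      φ (br u v) = br ((α ^ t * β ^ s) u) (φ v)) :
    ((∀ u v : G, (d ∘ₗ φ) (br u v) =
        br ((d ∘ₗ φ) u) ((α ^ (k + t) * β ^ (l + s)) v) +
        br ((α ^ (k + t) * β ^ (l + s)) u) ((d ∘ₗ φ) v)) ↔
     (∀ u v : G, (d ∘ₗ φ - φ ∘ₗ d) (br u v) = 0 ∧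
        br ((d ∘ₗ φ - φ ∘ₗ d) u) ((α ^ (k + t) * β ^ (l + s)) v) = 0 ∧
        br ((α ^ (k + t) * β ^ (l + s)) u) ((d ∘ₗ φ - φ ∘ₗ d) v) = 0)) := by
  have hαβ : Commute α β := hcomm
  have hdτ : Commute d (α ^ t * β ^ s) :=
    (Commute.pow_right hdα t).mul_right (Commute.pow_right hdβ s)
  have hφθ : Commute φ (α ^ k * β ^ l) :=
    (Commute.pow_right hφα k).mul_right (Commute.pow_right hφβ l)
  have hθτ_eq := pow_add_mul_pow_add hαβ k t l s
  have hτθ_eq : α ^ (k + t) * β ^ (l + s) = α ^ t * β ^ s * (α ^ k * β ^ l) := by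
    rw [add_comm k, add_comm l, pow_add_mul_pow_add hαβ]
  have hθτ : Commute (α ^ k * β ^ l) (α ^ t * β ^ s) := hθτ_eq.symm.trans hτθ_eq
  have hφd := IsTwistedCentroid.isTwistedDerivation_mul hd hφ
  have hc := IsTwistedDerivation.isTwistedCentroid_commutator hd hφ hdτ hφθ hθτ
  rw [← hτθ_eq] at hφd
  rw [← hθτ_eq] at hc
  exact hφd.sub_iff.symm.trans hc.isTwistedDerivation_iff

/-- For d an α^kβ^l-derivation and φ in the α^tβ^s-centroid of a multiplicative
BiHom-Lie algebra, d∘φ is an α^(k+t)β^(l+s)-derivation iff d∘φ - φ∘d is an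
α^(k+t)β^(l+s)-central derivation. -/
theorem der_comp_centroid_iff_central {K : Type*} [Field K] {G : Type*} [AddCommGroup G]
    [Module K G] (α β : G →ₗ[K] G) (br : G →ₗ[K] G →ₗ[K] G)
    (hcomm : α ∘ₗ β = β ∘ₗ α)
    (hskew : ∀ u v : G, br (β u) (α v) = - br (β v) (α u))
    (hjac : ∀ u v w : G,
      br (β (β u)) (br (β v) (α w)) + br (β (β v)) (br (β w) (α u)) +
        br (β (β w)) (br (β u) (α v)) = 0)
    (hα : ∀ u v : G, α (br u v) = br (α u) (α v))
    (hβ : ∀ u v : G, β (br u v) = br (β u) (β v))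
    (k l t s : ℕ) (d φ : G →ₗ[K] G)
    (hdα : d ∘ₗ α = α ∘ₗ d) (hdβ : d ∘ₗ β = β ∘ₗ d)
    (hd : ∀ u v : G, d (br u v) =
      br (d u) ((α ^ k * β ^ l) v) + br ((α ^ k * β ^ l) u) (d v))
    (hφα : φ ∘ₗ α = α ∘ₗ φ) (hφβ : φ ∘ₗ β = β ∘ₗ φ)
    (hφ : ∀ u v : G, φ (br u v) = br (φ u) ((α ^ t * β ^ s) v) ∧
      φ (br u v) = br ((α ^ t * β ^ s) u) (φ v)) :
    ((∀ u v : G, (d ∘ₗ φ) (br u v) =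
        br ((d ∘ₗ φ) u) ((α ^ (k + t) * β ^ (l + s)) v) +
        br ((α ^ (k + t) * β ^ (l + s)) u) ((d ∘ₗ φ) v)) ↔
     (∀ u v : G, (d ∘ₗ φ - φ ∘ₗ d) (br u v) = 0 ∧
        br ((d ∘ₗ φ - φ ∘ₗ d) u) ((α ^ (k + t) * β ^ (l + s)) v) = 0 ∧
        br ((α ^ (k + t) * β ^ (l + s)) u) ((d ∘ₗ φ - φ ∘ₗ d) v) = 0)) :=
  der_comp_centroid_iff_central_general α β br hcomm k l t s d φ hdα hdβ hd hφα hφβ hφ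
end

section
/- Let (L,[·,·],α,β) be a BiHom-Lie algebra. The α^kβ^l-quasi-centroid QC_{α^kβ^l}(L) = {d : d commutes with α,β and [d(x),α^kβ^l(y)] = [α^kβ^l(x),d(y)] for all x,y} is closed under the Jordan product μ(f,g) = ½(f∘g + g∘f) when the degrees are added; in particular, if f,g ∈ QC_{α^kβ^l}(L) ∩ QC-type maps then μ(f,g) ∈ QC_{α^{2k}β^{2l}}(L), and (QC_{α⁰β⁰}(L), μ) is a Jordan algebra. -/
/-!
If `f` and `g` commute with `γ` and satisfy `[f x, γ y] = [γ x, f y]`, `[g x, γ y] = [γ x, g y]`,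
then moving `f` and `g` across the bracket one at a time gives
`[f g x, γ² y] = [γ² x, g f y]`; symmetrizing, `f g + g f` satisfies the same identity for `γ²`,
which is `α^(2k) β^(2l)` when `γ = α^k β^l`. The Jordan identity for `c (f g + g f)` is an
identity of associative algebra, valid for every scalar `c`.
-/

namespace LinearMap

variable {R M N : Type*} [CommSemiring R] [AddCommMonoid M] [AddCommMonoid N]
  [Module R M] [Module R N] (br : M →ₗ[R] M →ₗ[R] N)

def IsQuasiCentroid (γ d : Module.End R M) : Prop :=
  ∀ u v, br (d u) (γ v) = br (γ u) (d v)

variable {br}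

theorem IsQuasiCentroid.add {γ f g : Module.End R M} (hf : IsQuasiCentroid br γ f)
    (hg : IsQuasiCentroid br γ g) : IsQuasiCentroid br γ (f + g) := fun u v => by
  simp only [add_apply, map_add, hf u v, hg u v]

theorem IsQuasiCentroid.smul {γ d : Module.End R M} (hd : IsQuasiCentroid br γ d) (c : R) :
    IsQuasiCentroid br γ (c • d) := fun u v => by
  simp only [smul_apply, map_smul, hd u v]

theorem IsQuasiCentroid.apply_mul_apply_sq {γ f g : Module.End R M}
    (hfγ : Commute f γ) (hgγ : Commute g γ)
    (hf : IsQuasiCentroid br γ f) (hg : IsQuasiCentroid br γ g) (u v : M) :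
    br ((f * g) u) ((γ * γ) v) = br ((γ * γ) u) ((g * f) v) := by
  have hfγv : f (γ v) = γ (f v) := LinearMap.congr_fun hfγ.eq v
  have hgγu : g (γ u) = γ (g u) := LinearMap.congr_fun hgγ.eq u
  simp only [Module.End.mul_apply]
  rw [hf (g u) (γ v), ← hgγu, hfγv, hg (γ u) (f v)]

theorem IsQuasiCentroid.mul_add_mul {γ f g : Module.End R M}
    (hfγ : Commute f γ) (hgγ : Commute g γ)
    (hf : IsQuasiCentroid br γ f) (hg : IsQuasiCentroid br γ g) :
    IsQuasiCentroid br (γ * γ) (f * g + g * f) := fun u v => by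
  rw [add_apply, add_apply, map_add, map_add, add_apply,
    hf.apply_mul_apply_sq hfγ hgγ hg u v, hg.apply_mul_apply_sq hgγ hfγ hf u v, add_comm]

theorem IsQuasiCentroid.mul_add_mul_pow_mul_pow {α β f g : Module.End R M} {k l : ℕ}
    (hαβ : Commute α β) (hfα : Commute f α) (hfβ : Commute f β)
    (hgα : Commute g α) (hgβ : Commute g β)
    (hf : IsQuasiCentroid br (α ^ k * β ^ l) f) (hg : IsQuasiCentroid br (α ^ k * β ^ l) g) :
    IsQuasiCentroid br (α ^ (2 * k) * β ^ (2 * l)) (f * g + g * f) := by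
  have hsq : α ^ (2 * k) * β ^ (2 * l) = α ^ k * β ^ l * (α ^ k * β ^ l) := by
    rw [(hαβ.pow_pow k l).symm.mul_mul_mul_comm, ← pow_add, ← pow_add, two_mul, two_mul]
  rw [hsq]
  exact hf.mul_add_mul ((hfα.pow_right k).mul_right (hfβ.pow_right l))
    ((hgα.pow_right k).mul_right (hgβ.pow_right l)) hg

end LinearMap

section SymmMul

variable {R A : Type*} [CommSemiring R] [Semiring A] [Module R A]

def symmMul (c : R) (f g : A) : A := c • (f * g + g * f)

theorem symmMul_comm (c : R) (f g : A) : symmMul c f g = symmMul c g f := by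
  rw [symmMul, symmMul, add_comm]

theorem symmMul_jordan [IsScalarTower R A A] [SMulCommClass R A A] (c : R) (f g : A) :
    symmMul c (symmMul c f g) (symmMul c f f) = symmMul c f (symmMul c g (symmMul c f f)) := by
  simp only [symmMul, smul_add, add_mul, mul_add, smul_mul_assoc, mul_smul_comm, smul_smul,
    mul_assoc]
  abel

theorem Commute.symmMul_left [IsScalarTower R A A] [SMulCommClass R A A] {c : R} {f g h : A}
    (hf : Commute f h) (hg : Commute g h) :
    Commute (symmMul c f g) h :=
  ((hf.mul_left hg).add_left (hg.mul_left hf)).smul_left c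

end SymmMul

theorem quasiCentroid_jordan_general {L : Type*} [AddCommGroup L] [Module ℂ L]
    (α β : L →ₗ[ℂ] L) (br : L →ₗ[ℂ] L →ₗ[ℂ] L)
    (hcomm : α ∘ₗ β = β ∘ₗ α) :
    let QC : ℕ → ℕ → (L →ₗ[ℂ] L) → Prop := fun k l d =>
      d ∘ₗ α = α ∘ₗ d ∧ d ∘ₗ β = β ∘ₗ d ∧
      ∀ u v : L, br (d u) ((α ^ k * β ^ l) v) = br ((α ^ k * β ^ l) u) (d v)
    let jp : (L →ₗ[ℂ] L) → (L →ₗ[ℂ] L) → (L →ₗ[ℂ] L) := fun f g =>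
      (2⁻¹ : ℂ) • (f ∘ₗ g + g ∘ₗ f)
    (∀ (k l : ℕ) (f g : L →ₗ[ℂ] L), QC k l f → QC k l g → QC (2 * k) (2 * l) (jp f g)) ∧
    (∀ f g : L →ₗ[ℂ] L, QC 0 0 f → QC 0 0 g → QC 0 0 (jp f g)) ∧
    (∀ f g : L →ₗ[ℂ] L, jp f g = jp g f) ∧
    (∀ f g : L →ₗ[ℂ] L, QC 0 0 f → QC 0 0 g →
      jp (jp f g) (jp f f) = jp f (jp g (jp f f))) := by
  intro QC jp
  -- `∘ₗ` is the multiplication of `Module.End`, so `QC` and `jp` unfold to `Commute`,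
  -- `IsQuasiCentroid` and `symmMul` by definition.
  have closed (k l : ℕ) (f g : L →ₗ[ℂ] L) (hf : QC k l f) (hg : QC k l g) :
      QC (2 * k) (2 * l) (jp f g) :=
    ⟨(Commute.symmMul_left hf.1 hg.1 : Commute (symmMul (2⁻¹ : ℂ) f g) α),
      (Commute.symmMul_left hf.2.1 hg.2.1 : Commute (symmMul (2⁻¹ : ℂ) f g) β),
      (LinearMap.IsQuasiCentroid.mul_add_mul_pow_mul_pow hcomm hf.1 hf.2.1 hg.1 hg.2.1
        hf.2.2 hg.2.2).smul (2⁻¹ : ℂ)⟩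
  exact ⟨closed, closed 0 0, symmMul_comm (2⁻¹ : ℂ),
    fun f g _ _ => symmMul_jordan (2⁻¹ : ℂ) f g⟩

/-- The quasi-centroids of a multiplicative BiHom-Lie algebra are closed under the
Jordan product μ(f,g) = ½(f∘g + g∘f) with addition of degrees; in particular
(QC_{α⁰β⁰}(L), μ) is a commutative algebra satisfying the Jordan identity. -/
theorem quasiCentroid_jordan {L : Type*} [AddCommGroup L] [Module ℂ L]
    (α β : L →ₗ[ℂ] L) (br : L →ₗ[ℂ] L →ₗ[ℂ] L)
    (hcomm : α ∘ₗ β = β ∘ₗ α)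
    (hskew : ∀ u v : L, br (β u) (α v) = - br (β v) (α u))
    (hjac : ∀ u v w : L,
      br (β (β u)) (br (β v) (α w)) + br (β (β v)) (br (β w) (α u)) +
        br (β (β w)) (br (β u) (α v)) = 0)
    (hα : ∀ u v : L, α (br u v) = br (α u) (α v))
    (hβ : ∀ u v : L, β (br u v) = br (β u) (β v)) :
    let QC : ℕ → ℕ → (L →ₗ[ℂ] L) → Prop := fun k l d =>
      d ∘ₗ α = α ∘ₗ d ∧ d ∘ₗ β = β ∘ₗ d ∧
      ∀ u v : L, br (d u) ((α ^ k * β ^ l) v) = br ((α ^ k * β ^ l) u) (d v)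
    let jp : (L →ₗ[ℂ] L) → (L →ₗ[ℂ] L) → (L →ₗ[ℂ] L) := fun f g =>
      (2⁻¹ : ℂ) • (f ∘ₗ g + g ∘ₗ f)
    (∀ (k l : ℕ) (f g : L →ₗ[ℂ] L), QC k l f → QC k l g → QC (2 * k) (2 * l) (jp f g)) ∧
    (∀ f g : L →ₗ[ℂ] L, QC 0 0 f → QC 0 0 g → QC 0 0 (jp f g)) ∧
    (∀ f g : L →ₗ[ℂ] L, jp f g = jp g f) ∧
    (∀ f g : L →ₗ[ℂ] L, QC 0 0 f → QC 0 0 g →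
      jp (jp f g) (jp f f) = jp f (jp g (jp f f))) :=
  quasiCentroid_jordan_general α β br hcomm
end

section
/- Every decomposable 2-dimensional multiplicative BiHom-Lie algebra L (a direct sum of two nonzero ideals) is non-regular (α or β is not bijective) and satisfies L = [L,L] ⊕ C(L), where C(L) is the center of L. -/
/-!
Both ideals are lines `ℂ e₁`, `ℂ e₂`, and the cross brackets lie in `ℂ e₁ ∩ ℂ e₂ = 0`, so in the
basis `e₁, e₂` the bracket is diagonal: `[e_i, e_j] = δ_ij c_i e_i`, and `α, β` are diagonal as
well. A basis vector with `c_i ≠ 0` lies in `[L,L]`, one with `c_i = 0` is central, and comparing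
coordinates shows `[L,L] ∩ C(L) = 0`; hence `L = [L,L] ⊕ C(L)`. Skew-symmetry at `(e_i, e_i)`
gives `[β e_i, α e_i] = 0`, i.e. `b_i a_i c_i = 0` for the eigenvalues `a_i, b_i` of `α, β`; if
`α` and `β` were bijective, every `c_i` would vanish and the bracket would be trivial.
-/

open Module Submodule LinearMap

section Bracket

variable {K L : Type*} [Field K] [AddCommGroup L] [Module K L]

def derivedSpan (br : L →ₗ[K] L →ₗ[K] L) : Submodule K L :=
  span K {z | ∃ u v, br u v = z}

def bracketCenter (br : L →ₗ[K] L →ₗ[K] L) : Submodule K L :=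
  (⨅ v, ker (br.flip v)) ⊓ (⨅ v, ker (br v))

variable {br : L →ₗ[K] L →ₗ[K] L}

theorem mem_bracketCenter {x : L} :
    x ∈ bracketCenter br ↔ (∀ v, br x v = 0) ∧ ∀ v, br v x = 0 := by
  simp [bracketCenter, mem_iInf]

theorem bracket_self_eq_zero_of_skew [CharZero K] {α β : L →ₗ[K] L}
    (hskew : ∀ u v, br (β u) (α v) = - br (β v) (α u))
    (hα : Function.Injective α) (hβ : Function.Injective β)
    {e : L} {a b : K} (hae : α e = a • e) (hbe : β e = b • e) : br e e = 0 := by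
  rcases eq_or_ne e 0 with rfl | he
  · simp
  have ha : a ≠ 0 := by
    rintro rfl
    exact he ((map_eq_zero_iff α hα).1 (by simpa using hae))
  have hb : b ≠ 0 := by
    rintro rfl
    exact he ((map_eq_zero_iff β hβ).1 (by simpa using hbe))
  have h : (2 : K) • br (β e) (α e) = 0 := by
    rw [two_smul]
    nth_rewrite 1 [hskew]
    exact neg_add_cancel _
  rw [hae, hbe, map_smul, map_smul, LinearMap.smul_apply, smul_smul, smul_smul] at h
  exact (smul_eq_zero.1 h).resolve_left (by simp [ha, hb])

namespace Module.Basis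

variable {ι : Type*} (b : Basis ι K L)

theorem repr_eq_zero_of_mem_span_singleton {i j : ι} (hij : i ≠ j) {z : L} (hz : z ∈ K ∙ b j) :
    b.repr z i = 0 := by
  obtain ⟨t, rfl⟩ := mem_span_singleton.1 hz
  simp [hij.symm]

/-- Each line `K ∙ b i` is a two-sided ideal for `br`. -/
def SpansIdeals (br : L →ₗ[K] L →ₗ[K] L) : Prop :=
  ∀ i x, br (b i) x ∈ K ∙ b i ∧ br x (b i) ∈ K ∙ b i

variable {b}

theorem repr_bracket (hideal : b.SpansIdeals br) (x y : L) (i : ι) :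
    b.repr (br x y) i = b.repr (br (b i) (b i)) i * b.repr x i * b.repr y i := by
  suffices h : br.compr₂ (b.coord i) =
      b.repr (br (b i) (b i)) i • (LinearMap.mul K K).compl₁₂ (b.coord i) (b.coord i) by
    simpa [mul_assoc] using congr($h x y)
  refine ext_basis b b fun j k => ?_
  rcases eq_or_ne j i with rfl | hj
  · rcases eq_or_ne k j with rfl | hk
    · simp
    · simp [hk, b.repr_eq_zero_of_mem_span_singleton hk.symm (hideal k (b j)).2]
  · simp [hj, b.repr_eq_zero_of_mem_span_singleton hj.symm (hideal j (b k)).1]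

theorem bracket_self_eq_smul (hideal : b.SpansIdeals br) (i : ι) :
    br (b i) (b i) = b.repr (br (b i) (b i)) i • b i := by
  obtain ⟨t, ht⟩ := mem_span_singleton.1 (hideal i (b i)).1
  simp [← ht]

theorem mem_derivedSpan_of_repr_bracket_ne_zero (hideal : b.SpansIdeals br) {i : ι}
    (hc : b.repr (br (b i) (b i)) i ≠ 0) : b i ∈ derivedSpan br := by
  have h : br (b i) (b i) ∈ derivedSpan br := subset_span ⟨b i, b i, rfl⟩
  rw [bracket_self_eq_smul hideal] at h
  exact (smul_mem_iff _ hc).1 h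

theorem mem_bracketCenter_of_repr_bracket_eq_zero (hideal : b.SpansIdeals br) {i : ι}
    (hc : b.repr (br (b i) (b i)) i = 0) : b i ∈ bracketCenter br := by
  refine mem_bracketCenter.2
    ⟨fun v => b.ext_elem fun j => ?_, fun v => b.ext_elem fun j => ?_⟩ <;>
  · rw [repr_bracket hideal]
    rcases eq_or_ne j i with rfl | hj
    · simp [hc]
    · simp [hj.symm]

theorem repr_eq_zero_of_mem_derivedSpan (hideal : b.SpansIdeals br) {x : L}
    (hx : x ∈ derivedSpan br) {i : ι} (hc : b.repr (br (b i) (b i)) i = 0) :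
    b.repr x i = 0 := by
  induction hx using span_induction with
  | mem z hz =>
    obtain ⟨u, v, rfl⟩ := hz
    rw [repr_bracket hideal, hc, zero_mul, zero_mul]
  | zero => simp
  | add y z _ _ hy hz => simp [hy, hz]
  | smul t y _ hy => simp [hy]

theorem isCompl_derivedSpan_bracketCenter (hideal : b.SpansIdeals br) :
    IsCompl (derivedSpan br) (bracketCenter br) := by
  constructor
  · refine disjoint_def.2 fun x hD hC => b.ext_elem fun i => ?_
    by_cases hc : b.repr (br (b i) (b i)) i = 0
    · simpa using repr_eq_zero_of_mem_derivedSpan hideal hD hc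
    · have h := congr(b.repr $((mem_bracketCenter.1 hC).1 (b i)) i)
      rw [repr_bracket hideal] at h
      simpa [hc] using h
  · rw [codisjoint_iff_le_sup, ← b.span_eq, span_le]
    rintro _ ⟨i, rfl⟩
    by_cases hc : b.repr (br (b i) (b i)) i = 0
    · exact mem_sup_right (mem_bracketCenter_of_repr_bracket_eq_zero hideal hc)
    · exact mem_sup_left (mem_derivedSpan_of_repr_bracket_ne_zero hideal hc)

theorem eq_zero_of_skew_of_injective [CharZero K] {α β : L →ₗ[K] L}
    (hideal : b.SpansIdeals br)
    (hαb : ∀ i, α (b i) ∈ K ∙ b i) (hβb : ∀ i, β (b i) ∈ K ∙ b i)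
    (hskew : ∀ u v, br (β u) (α v) = - br (β v) (α u))
    (hα : Function.Injective α) (hβ : Function.Injective β) : br = 0 := by
  refine LinearMap.ext fun x => LinearMap.ext fun y => b.ext_elem fun i => ?_
  obtain ⟨a, ha⟩ := mem_span_singleton.1 (hαb i)
  obtain ⟨c, hc⟩ := mem_span_singleton.1 (hβb i)
  rw [repr_bracket hideal, bracket_self_eq_zero_of_skew hskew hα hβ ha.symm hc.symm]
  simp

end Module.Basis

end Bracket

section Decomposition

variable {K L : Type*} [Field K] [AddCommGroup L] [Module K L] {I₁ I₂ : Submodule K L}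

theorem finrank_eq_one_of_isCompl_of_finrank_eq_two (hdim : finrank K L = 2)
    (h : IsCompl I₁ I₂) (h₁ : I₁ ≠ ⊥) (h₂ : I₂ ≠ ⊥) : finrank K I₁ = 1 := by
  have := Module.finite_of_finrank_eq_succ hdim
  have hsum := finrank_add_eq_of_isCompl h
  have hpos₁ := Submodule.finrank_eq_zero.not.2 h₁
  have hpos₂ := Submodule.finrank_eq_zero.not.2 h₂
  omega

theorem exists_basis_span_singleton_eq_or_eq (h : IsCompl I₁ I₂) (h₁ : finrank K I₁ = 1)
    (h₂ : finrank K I₂ = 1) : ∃ (ι : Type) (b : Basis ι K L), ∀ i, K ∙ b i = I₁ ∨ K ∙ b i = I₂ := by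
  let b := ((basisUnique Unit h₁).prod (basisUnique Unit h₂)).map (prodEquivOfIsCompl I₁ I₂ h)
  refine ⟨Unit ⊕ Unit, b, ?_⟩
  rintro (i | i)
  · exact .inl (eq_span_singleton_of_mem_of_finrank_eq_one h₁ (by simp [b])
      (by simpa [b] using (basisUnique Unit h₁).ne_zero i)).symm
  · exact .inr (eq_span_singleton_of_mem_of_finrank_eq_one h₂ (by simp [b])
      (by simpa [b] using (basisUnique Unit h₂).ne_zero i)).symm

end Decomposition

theorem decomposable_two_dim_general {L : Type*} [AddCommGroup L] [Module ℂ L]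
    (hdim : Module.finrank ℂ L = 2)
    (α β : L →ₗ[ℂ] L) (br : L →ₗ[ℂ] L →ₗ[ℂ] L)
    (hskew : ∀ u v : L, br (β u) (α v) = - br (β v) (α u))
    (hnontriv : ¬ ∀ u v : L, br u v = 0)
    (hdecomp : ∃ I₁ I₂ : Submodule ℂ L, I₁ ≠ ⊥ ∧ I₂ ≠ ⊥ ∧ IsCompl I₁ I₂ ∧
      ((∀ u ∈ I₁, α u ∈ I₁) ∧ (∀ u ∈ I₁, β u ∈ I₁) ∧
        (∀ u ∈ I₁, ∀ v : L, br u v ∈ I₁) ∧ (∀ u ∈ I₁, ∀ v : L, br v u ∈ I₁)) ∧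
      ((∀ u ∈ I₂, α u ∈ I₂) ∧ (∀ u ∈ I₂, β u ∈ I₂) ∧
        (∀ u ∈ I₂, ∀ v : L, br u v ∈ I₂) ∧ (∀ u ∈ I₂, ∀ v : L, br v u ∈ I₂))) :
    ¬ (Function.Bijective α ∧ Function.Bijective β) ∧
    IsCompl (Submodule.span ℂ {z : L | ∃ u v : L, br u v = z})
      ((⨅ v : L, LinearMap.ker (br.flip v)) ⊓ (⨅ v : L, LinearMap.ker (br v))) := by
  obtain ⟨I₁, I₂, hI₁, hI₂, hcompl, ⟨hα₁, hβ₁, hl₁, hr₁⟩, ⟨hα₂, hβ₂, hl₂, hr₂⟩⟩ := hdecomp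
  obtain ⟨ι, b, hline⟩ := exists_basis_span_singleton_eq_or_eq hcompl
    (finrank_eq_one_of_isCompl_of_finrank_eq_two hdim hcompl hI₁ hI₂)
    (finrank_eq_one_of_isCompl_of_finrank_eq_two hdim hcompl.symm hI₂ hI₁)
  have hmem : ∀ i, b i ∈ ℂ ∙ b i := fun i => mem_span_singleton_self (b i)
  have hideal : b.SpansIdeals br := fun i x => by
    rcases hline i with h | h <;> have hi := hmem i <;> rw [h] at hi ⊢
    exacts [⟨hl₁ _ hi x, hr₁ _ hi x⟩, ⟨hl₂ _ hi x, hr₂ _ hi x⟩]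
  have hinv : ∀ i, α (b i) ∈ ℂ ∙ b i ∧ β (b i) ∈ ℂ ∙ b i := fun i => by
    rcases hline i with h | h <;> have hi := hmem i <;> rw [h] at hi ⊢
    exacts [⟨hα₁ _ hi, hβ₁ _ hi⟩, ⟨hα₂ _ hi, hβ₂ _ hi⟩]
  refine ⟨fun ⟨hα, hβ⟩ => hnontriv fun u v => ?_, b.isCompl_derivedSpan_bracketCenter hideal⟩
  rw [b.eq_zero_of_skew_of_injective hideal (fun i => (hinv i).1) (fun i => (hinv i).2) hskew
    hα.injective hβ.injective, LinearMap.zero_apply, LinearMap.zero_apply]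

/-- Every decomposable 2-dimensional multiplicative BiHom-Lie algebra is non-regular
and satisfies L = [L,L] ⊕ C(L). -/
theorem decomposable_two_dim {L : Type*} [AddCommGroup L] [Module ℂ L]
    [FiniteDimensional ℂ L] (hdim : Module.finrank ℂ L = 2)
    (α β : L →ₗ[ℂ] L) (br : L →ₗ[ℂ] L →ₗ[ℂ] L)
    (hcomm : α ∘ₗ β = β ∘ₗ α)
    (hskew : ∀ u v : L, br (β u) (α v) = - br (β v) (α u))
    (hjac : ∀ u v w : L,
      br (β (β u)) (br (β v) (α w)) + br (β (β v)) (br (β w) (α u)) +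
        br (β (β w)) (br (β u) (α v)) = 0)
    (hα : ∀ u v : L, α (br u v) = br (α u) (α v))
    (hβ : ∀ u v : L, β (br u v) = br (β u) (β v))
    (hnontriv : ¬ ∀ u v : L, br u v = 0)
    (hdecomp : ∃ I₁ I₂ : Submodule ℂ L, I₁ ≠ ⊥ ∧ I₂ ≠ ⊥ ∧ IsCompl I₁ I₂ ∧
      ((∀ u ∈ I₁, α u ∈ I₁) ∧ (∀ u ∈ I₁, β u ∈ I₁) ∧
        (∀ u ∈ I₁, ∀ v : L, br u v ∈ I₁) ∧ (∀ u ∈ I₁, ∀ v : L, br v u ∈ I₁)) ∧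
      ((∀ u ∈ I₂, α u ∈ I₂) ∧ (∀ u ∈ I₂, β u ∈ I₂) ∧
        (∀ u ∈ I₂, ∀ v : L, br u v ∈ I₂) ∧ (∀ u ∈ I₂, ∀ v : L, br v u ∈ I₂))) :
    ¬ (Function.Bijective α ∧ Function.Bijective β) ∧
    IsCompl (Submodule.span ℂ {z : L | ∃ u v : L, br u v = z})
      ((⨅ v : L, LinearMap.ker (br.flip v)) ⊓ (⨅ v : L, LinearMap.ker (br v))) :=
  decomposable_two_dim_general hdim α β br hskew hnontriv hdecomp
end
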